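/- arXiv:1505.03744 — 2 statements merged into one kernel-verified Lean document; each statement's English description precedes it below -/
import Mathlib

section
/- For every a > 0 and every φ′ with |φ′| < δ/2, the limit as ε → 0⁻ (ε negative tending to 0) of ∫_{−δ/2}^{δ/2} (a²(φ−φ′)² − 2εa)/(a²(φ−φ′)² + ε²) dφ equals δ + 2π. -/
/-!
For `ε ≠ 0` the integrand is `1 - ((ε + 2a)/a) · aε/(a²(φ-φ')² + ε²)`, so it has the explicit
antiderivative `φ - ((ε + 2a)/a) · arctan (a(φ-φ')/ε)`. As `ε → 0⁻` the arctangent at the upper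
endpoint tends to `-π/2` and at the lower endpoint to `π/2`, while the coefficient tends to `2`;
the arctangent term thus contributes `2π` in the limit.
-/

open MeasureTheory Real Filter Topology

theorem hasDerivAt_sub_mul_arctan_div {a ε : ℝ} (ha : a ≠ 0) (hε : ε ≠ 0) (φ' x : ℝ) :
    HasDerivAt (fun φ => φ - (ε + 2 * a) / a * arctan (a * (φ - φ') / ε))
      ((a ^ 2 * (x - φ') ^ 2 - 2 * ε * a) / (a ^ 2 * (x - φ') ^ 2 + ε ^ 2)) x := by
  have hlin : HasDerivAt (fun φ => a * (φ - φ') / ε) (a / ε) x := by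
    simpa using (((hasDerivAt_id x).sub_const φ').const_mul a).div_const ε
  refine ((hasDerivAt_id x).sub
    (((hasDerivAt_arctan _).comp x hlin).const_mul ((ε + 2 * a) / a))).congr_deriv ?_
  have hden : a ^ 2 * (x - φ') ^ 2 + ε ^ 2 ≠ 0 := by positivity
  have harg : 1 + (a * (x - φ') / ε) ^ 2 ≠ 0 := by positivity
  field_simp
  ring

theorem integral_sq_sub_div_sq_add_sq {a ε : ℝ} (ha : a ≠ 0) (hε : ε ≠ 0) (φ' l u : ℝ) :
    ∫ φ in l..u, (a ^ 2 * (φ - φ') ^ 2 - 2 * ε * a) / (a ^ 2 * (φ - φ') ^ 2 + ε ^ 2) =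
      u - l - (ε + 2 * a) / a *
        (arctan (a * (u - φ') / ε) - arctan (a * (l - φ') / ε)) := by
  have hcont : Continuous fun φ : ℝ =>
      (a ^ 2 * (φ - φ') ^ 2 - 2 * ε * a) / (a ^ 2 * (φ - φ') ^ 2 + ε ^ 2) :=
    Continuous.div (by fun_prop) (by fun_prop) fun φ => by positivity
  rw [intervalIntegral.integral_eq_sub_of_hasDerivAt
    (fun x _ => hasDerivAt_sub_mul_arctan_div ha hε φ' x) (hcont.intervalIntegrable l u)]
  ring

theorem tendsto_arctan_div_nhdsLT_zero_of_pos {c : ℝ} (hc : 0 < c) :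
    Tendsto (fun ε => arctan (c / ε)) (𝓝[<] 0) (𝓝 (-(π / 2))) :=
  (tendsto_arctan_atBot.mono_right nhdsWithin_le_nhds).comp
    (tendsto_inv_nhdsLT_zero.const_mul_atBot hc)

theorem tendsto_arctan_div_nhdsLT_zero_of_neg {c : ℝ} (hc : c < 0) :
    Tendsto (fun ε => arctan (c / ε)) (𝓝[<] 0) (𝓝 (π / 2)) :=
  (tendsto_arctan_atTop.mono_right nhdsWithin_le_nhds).comp
    (tendsto_inv_nhdsLT_zero.const_mul_atBot_of_neg hc)

theorem tendsto_integral_sq_sub_div_sq_add_sq {a φ' l u : ℝ} (ha : 0 < a) (hl : l < φ')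
    (hu : φ' < u) :
    Tendsto (fun ε => ∫ φ in l..u,
        (a ^ 2 * (φ - φ') ^ 2 - 2 * ε * a) / (a ^ 2 * (φ - φ') ^ 2 + ε ^ 2))
      (𝓝[<] 0) (𝓝 (u - l + 2 * π)) := by
  have hcoef : Tendsto (fun ε : ℝ => (ε + 2 * a) / a) (𝓝[<] 0) (𝓝 2) := by
    have h := ((continuous_add_const (2 * a)).tendsto 0).div_const a
    rw [zero_add, mul_div_cancel_right₀ _ ha.ne'] at h
    exact h.mono_left nhdsWithin_le_nhds
  have hupper := tendsto_arctan_div_nhdsLT_zero_of_pos (mul_pos ha (sub_pos.mpr hu))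
  have hlower := tendsto_arctan_div_nhdsLT_zero_of_neg (mul_neg_of_pos_of_neg ha (sub_neg.mpr hl))
  have hlim := tendsto_const_nhds (x := u - l) |>.sub (hcoef.mul (hupper.sub hlower))
  rw [show u - l - 2 * (-(π / 2) - π / 2) = u - l + 2 * π by ring] at hlim
  refine hlim.congr' ?_
  filter_upwards [self_mem_nhdsWithin] with ε (hε : ε < 0)
  exact (integral_sq_sub_div_sq_add_sq ha.ne' hε.ne φ' l u).symm

theorem stmt2_general (δ a φ' : ℝ) (ha : 0 < a) (hφ' : |φ'| < δ / 2) :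
    Tendsto (fun ε : ℝ => ∫ φ in (-δ/2)..(δ/2),
        (a ^ 2 * (φ - φ') ^ 2 - 2 * ε * a) / (a ^ 2 * (φ - φ') ^ 2 + ε ^ 2))
      (nhdsWithin 0 (Set.Iio 0)) (nhds (δ + 2 * Real.pi)) := by
  obtain ⟨hl, hu⟩ := abs_lt.mp hφ'
  have h := tendsto_integral_sq_sub_div_sq_add_sq ha (neg_div 2 δ ▸ hl) hu
  rwa [show δ / 2 - -δ / 2 = δ by ring] at h

/-- For `a > 0` and `|φ′| < δ/2`, the limit as `ε → 0⁻` of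
`∫_{−δ/2}^{δ/2} (a²(φ−φ′)² − 2εa)/(a²(φ−φ′)² + ε²) dφ` equals `δ + 2π`. -/
theorem stmt2 (δ a φ' : ℝ) (hδ : 0 < δ) (ha : 0 < a) (hφ' : |φ'| < δ / 2) :
    Tendsto (fun ε : ℝ => ∫ φ in (-δ/2)..(δ/2),
        (a ^ 2 * (φ - φ') ^ 2 - 2 * ε * a) / (a ^ 2 * (φ - φ') ^ 2 + ε ^ 2))
      (nhdsWithin 0 (Set.Iio 0)) (nhds (δ + 2 * Real.pi)) :=
  stmt2_general δ a φ' ha hφ'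
end

section
/- Suppose h : ℝ → ℝ is continuous with h(φ′) bounded, and define for ε > 0, I(ε) = ∫_{−δ/2}^{δ/2} ∫_{−δ/2}^{δ/2} (1 + |φ′|/δ) · (a²(φ−φ′)² − 2εa)/(a²(φ−φ′)² + ε²) dφ dφ′. Then lim_{ε→0⁺} I(ε) = (δ − 2π) · ∫_{−δ/2}^{δ/2} (1 + |φ′|/δ) dφ′ = (δ − 2π) · (5δ/4). -/
/-!
For `ε > 0` the inner integrand has the explicit primitive
`φ - ((ε + 2a)/a) · arctan (a (φ - φ') / ε)`, so the inner integral over `[u, v]` equals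
`v - u - ((ε + 2a)/a) (arctan (a (v - φ')/ε) - arctan (a (u - φ')/ε))`.
For `u < φ' < v` the two arctangents tend to `±π/2`, so the inner integral tends to `v - u - 2π`,
and it stays bounded by `v - u + 3π` once `ε ≤ a`. Dominated convergence in `φ'` then gives the
limit `(v - u - 2π) ∫ w` for any integrable weight `w`.
-/

open MeasureTheory Real Filter Set Topology

section ArctanKernel

variable {a ε : ℝ}

lemma hasDerivAt_sub_mul_arctan (ha : a ≠ 0) (hε : ε ≠ 0) (c x : ℝ) :
    HasDerivAt (fun x => x - (ε + 2 * a) / a * arctan (a * (x - c) / ε))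
      ((a ^ 2 * (x - c) ^ 2 - 2 * ε * a) / (a ^ 2 * (x - c) ^ 2 + ε ^ 2)) x := by
  have hlin : HasDerivAt (fun x => a * (x - c) / ε) (a / ε) x := by
    simpa using (((hasDerivAt_id x).sub_const c).const_mul a).div_const ε
  refine ((hasDerivAt_id' x).sub
    (((hasDerivAt_arctan _).comp x hlin).const_mul ((ε + 2 * a) / a))).congr_deriv ?_
  have : 1 + (a * (x - c) / ε) ^ 2 ≠ 0 := by positivity
  field_simp
  ring

lemma integral_kernel_eq_arctan (ha : a ≠ 0) (hε : ε ≠ 0) (c u v : ℝ) :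
    ∫ x in u..v, (a ^ 2 * (x - c) ^ 2 - 2 * ε * a) / (a ^ 2 * (x - c) ^ 2 + ε ^ 2)
      = v - u - (ε + 2 * a) / a * (arctan (a * (v - c) / ε) - arctan (a * (u - c) / ε)) := by
  have hden : ∀ x, a ^ 2 * (x - c) ^ 2 + ε ^ 2 ≠ 0 := fun x => by positivity
  rw [intervalIntegral.integral_eq_sub_of_hasDerivAt
    (fun x _ => hasDerivAt_sub_mul_arctan ha hε c x)
    ((by fun_prop : Continuous fun x => a ^ 2 * (x - c) ^ 2 - 2 * ε * a).div
      (by fun_prop) hden |>.intervalIntegrable _ _)]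
  ring

lemma abs_sub_mul_arctan_sub_le (ha : 0 < a) (hε₀ : 0 ≤ ε) (hεa : ε ≤ a) (c u v : ℝ) :
    |v - u - (ε + 2 * a) / a * (arctan (a * (v - c) / ε) - arctan (a * (u - c) / ε))|
      ≤ |v - u| + 3 * π := by
  have hk : |(ε + 2 * a) / a| ≤ 3 := by
    rw [abs_of_nonneg (by positivity), div_le_iff₀ ha]
    linarith
  have harctan : ∀ y, |arctan y| ≤ π / 2 := fun y =>
    abs_le.mpr ⟨(neg_pi_div_two_lt_arctan y).le, (arctan_lt_pi_div_two y).le⟩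
  have hdiff : |arctan (a * (v - c) / ε) - arctan (a * (u - c) / ε)| ≤ π := by
    linarith [abs_sub (arctan (a * (v - c) / ε)) (arctan (a * (u - c) / ε)),
      harctan (a * (v - c) / ε), harctan (a * (u - c) / ε)]
  calc _ ≤ |v - u| + |(ε + 2 * a) / a| *
        |arctan (a * (v - c) / ε) - arctan (a * (u - c) / ε)| :=
        (abs_sub _ _).trans_eq (by rw [abs_mul])
    _ ≤ |v - u| + 3 * π := by gcongr

lemma tendsto_sub_mul_arctan_sub (ha : 0 < a) {c u v : ℝ} (hu : u < c) (hv : c < v) :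
    Tendsto (fun ε => v - u - (ε + 2 * a) / a *
        (arctan (a * (v - c) / ε) - arctan (a * (u - c) / ε)))
      (𝓝[>] 0) (𝓝 (v - u - 2 * π)) := by
  have hk : Tendsto (fun ε : ℝ => (ε + 2 * a) / a) (𝓝[>] 0) (𝓝 2) := by
    have : Tendsto (fun ε : ℝ => (ε + 2 * a) / a) (𝓝 0) (𝓝 ((0 + 2 * a) / a)) :=
      (by fun_prop : Continuous fun ε : ℝ => (ε + 2 * a) / a).tendsto 0
    rw [zero_add, mul_div_cancel_right₀ _ ha.ne'] at this
    exact tendsto_nhdsWithin_of_tendsto_nhds this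
  have hv' : Tendsto (fun ε => arctan (a * (v - c) / ε)) (𝓝[>] 0) (𝓝 (π / 2)) :=
    (tendsto_arctan_atTop.mono_right nhdsWithin_le_nhds).comp <|
      (tendsto_inv_nhdsGT_zero.const_mul_atTop (by nlinarith)).congr
        fun ε => (div_eq_mul_inv _ ε).symm
  have hu' : Tendsto (fun ε => arctan (a * (u - c) / ε)) (𝓝[>] 0) (𝓝 (-(π / 2))) :=
    (tendsto_arctan_atBot.mono_right nhdsWithin_le_nhds).comp <|
      (tendsto_inv_nhdsGT_zero.const_mul_atTop_of_neg (by nlinarith)).congr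
        fun ε => (div_eq_mul_inv _ ε).symm
  convert tendsto_const_nhds.sub (hk.mul (hv'.sub hu')) using 2
  ring

end ArctanKernel

theorem tendsto_integral_weight_mul_kernel {a u v : ℝ} (ha : 0 < a) (huv : u ≤ v)
    {w : ℝ → ℝ} (hw : IntervalIntegrable w volume u v) :
    Tendsto (fun ε => ∫ c in u..v, ∫ x in u..v,
        w c * ((a ^ 2 * (x - c) ^ 2 - 2 * ε * a) / (a ^ 2 * (x - c) ^ 2 + ε ^ 2)))
      (𝓝[>] 0) (𝓝 ((v - u - 2 * π) * ∫ c in u..v, w c)) := by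
  set G : ℝ → ℝ → ℝ := fun ε c => w c * (v - u - (ε + 2 * a) / a *
    (arctan (a * (v - c) / ε) - arctan (a * (u - c) / ε)))
  have hclosed : ∀ᶠ ε in 𝓝[>] (0 : ℝ), ∫ c in u..v, G ε c =
      ∫ c in u..v, ∫ x in u..v, w c * ((a ^ 2 * (x - c) ^ 2 - 2 * ε * a) / (a ^ 2 * (x - c) ^ 2 + ε ^ 2)) := by
    filter_upwards [self_mem_nhdsWithin] with ε hε
    refine intervalIntegral.integral_congr fun c _ => ?_
    rw [intervalIntegral.integral_const_mul, integral_kernel_eq_arctan ha.ne' (ne_of_gt hε)]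
  refine Tendsto.congr' hclosed ?_
  rw [mul_comm, ← intervalIntegral.integral_mul_const]
  refine intervalIntegral.tendsto_integral_filter_of_dominated_convergence
    (fun c => ‖w c‖ * (|v - u| + 3 * π)) ?_ ?_ (hw.norm.mul_const _) ?_
  · refine Eventually.of_forall fun ε => hw.def'.aestronglyMeasurable.mul ?_
    exact Continuous.aestronglyMeasurable (by fun_prop)
  · filter_upwards [Ioc_mem_nhdsGT ha] with ε hε
    refine Eventually.of_forall fun c _ => ?_
    rw [norm_mul, Real.norm_eq_abs (v - u - _)]
    gcongr
    exact abs_sub_mul_arctan_sub_le ha hε.1.le hε.2 c u v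
  · filter_upwards [Measure.ae_ne volume v] with c hcv hc
    rw [uIoc_of_le huv] at hc
    exact (tendsto_sub_mul_arctan_sub ha hc.1 (lt_of_le_of_ne hc.2 hcv)).const_mul (w c)

lemma integral_abs_neg_self {c : ℝ} (hc : 0 ≤ c) : ∫ x in -c..c, |x| = c ^ 2 := by
  rw [← intervalIntegral.integral_add_adjacent_intervals (b := 0)
    (continuous_abs.intervalIntegrable _ _) (continuous_abs.intervalIntegrable _ _),
    intervalIntegral.integral_congr (g := fun x => -x) fun x hx => abs_of_nonpos ?_,
    intervalIntegral.integral_congr (g := fun x => x) fun x hx => abs_of_nonneg ?_]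
  · rw [intervalIntegral.integral_neg, integral_id, integral_id]
    ring
  · exact (uIcc_of_le hc ▸ hx).1
  · exact (uIcc_of_le (neg_nonpos.mpr hc) ▸ hx).2

lemma integral_one_add_abs_div {δ : ℝ} (hδ : 0 < δ) :
    ∫ x in -δ / 2..δ / 2, (1 + |x| / δ) = 5 * δ / 4 := by
  rw [intervalIntegral.integral_add intervalIntegrable_const
      ((continuous_abs.div_const δ).intervalIntegrable _ _),
    intervalIntegral.integral_div, intervalIntegral.integral_const, neg_div,
    integral_abs_neg_self (by positivity)]
  field_simp
  ring

theorem stmt16_general (δ a : ℝ) (hδ : 0 < δ) (ha : 0 < a) :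
    Tendsto (fun ε : ℝ => ∫ φ' in (-δ/2)..(δ/2), ∫ φ in (-δ/2)..(δ/2),
        (1 + |φ'| / δ) * ((a ^ 2 * (φ - φ') ^ 2 - 2 * ε * a)
          / (a ^ 2 * (φ - φ') ^ 2 + ε ^ 2)))
      (nhdsWithin 0 (Set.Ioi 0)) (nhds ((δ - 2 * Real.pi) * (5 * δ / 4))) := by
  have hlim := tendsto_integral_weight_mul_kernel (w := fun x => 1 + |x| / δ) ha
    (by linarith : -δ / 2 ≤ δ / 2) ((by fun_prop : Continuous _).intervalIntegrable _ _)
  rwa [integral_one_add_abs_div hδ, show δ / 2 - -δ / 2 = δ by ring] at hlim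

/-- Double-integral limit with the weight `1 + |φ′|/δ`:
`lim_{ε→0⁺} ∫∫ (1 + |φ′|/δ)(a²(φ−φ′)² − 2εa)/(a²(φ−φ′)² + ε²) dφ dφ′
  = (δ − 2π)·(5δ/4)`. -/
theorem stmt16 (δ a : ℝ) (hδ : 0 < δ) (hδπ : δ < Real.pi) (ha : 0 < a)
    (h : ℝ → ℝ) (hcont : Continuous h) (hbdd : ∃ M, ∀ x, |h x| ≤ M) :
    Tendsto (fun ε : ℝ => ∫ φ' in (-δ/2)..(δ/2), ∫ φ in (-δ/2)..(δ/2),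
        (1 + |φ'| / δ) * ((a ^ 2 * (φ - φ') ^ 2 - 2 * ε * a)
          / (a ^ 2 * (φ - φ') ^ 2 + ε ^ 2)))
      (nhdsWithin 0 (Set.Ioi 0)) (nhds ((δ - 2 * Real.pi) * (5 * δ / 4))) :=
  stmt16_general δ a hδ ha
end
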